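/- arXiv:2603.22654 — 9 statements merged into one kernel-verified Lean document; each statement's English description precedes it below -/
import Mathlib

section
/- For all real numbers a, b: if b ≠ 0 then a + b·φ_S(a,b) = -√(a² + b⁴) < 0; and if b = 0 and a < 0 then a + b·φ_S(a,b) = a < 0. Consequently, whenever (b = 0 implies a < 0), the input u = φ_S(a,b) satisfies the strict inequality a + b·u < 0. -/
/-- Sontag's universal formula. -/
noncomputable def phiS (a b : ℝ) : ℝ :=
  if b ≠ 0 then -(a + Real.sqrt (a ^ 2 + b ^ 4)) / b else 0

/-- With `u = φ_S(a,b)`: if `b ≠ 0` then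
`a + b·u = -√(a² + b⁴) < 0`; if `b = 0` and `a < 0` then `a + b·u = a < 0`;
consequently whenever `b = 0 → a < 0`, one has `a + b·u < 0`. -/
theorem stmt_3 (a b : ℝ) :
    (b ≠ 0 → a + b * phiS a b = -Real.sqrt (a ^ 2 + b ^ 4)
      ∧ -Real.sqrt (a ^ 2 + b ^ 4) < 0) ∧
    (b = 0 → a < 0 → a + b * phiS a b = a ∧ a < 0) ∧
    ((b = 0 → a < 0) → a + b * phiS a b < 0) := by
  have key : b ≠ 0 → a + b * phiS a b = -Real.sqrt (a ^ 2 + b ^ 4)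
      ∧ -Real.sqrt (a ^ 2 + b ^ 4) < 0 := by
    intro hb
    have hpos : (0:ℝ) < a ^ 2 + b ^ 4 := by positivity
    constructor
    · simp only [phiS, if_pos hb]
      field_simp
      ring
    · have := Real.sqrt_pos.mpr hpos
      linarith
  refine ⟨key, ?_, ?_⟩
  · intro hb ha
    exact ⟨by simp [phiS, hb], ha⟩
  · intro h
    by_cases hb : b = 0
    · have := h hb
      simpa [phiS, hb] using this
    · obtain ⟨he, hl⟩ := key hb
      rw [he]; exact hl
end

section
/- For all real numbers a, b: if b ≠ 0 then a + b·φ_F(a,b) = min{a, -b²} < 0; and if b = 0 and a < 0 then a + b·φ_F(a,b) = a < 0. Consequently, whenever (b = 0 implies a < 0), the input u = φ_F(a,b) satisfies the strict inequality a + b·u < 0. -/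
/-- Freeman's (pointwise min-norm) universal formula. -/
noncomputable def phiF (a b : ℝ) : ℝ :=
  if b ≠ 0 then -(max (a + b ^ 2) 0) / b else 0

lemma key (a b : ℝ) (hb : b ≠ 0) :
    a + b * phiF a b = min a (-b ^ 2) ∧ min a (-b ^ 2) < 0 := by
  have hb2 : (0:ℝ) < b ^ 2 := by positivity
  constructor
  · rw [phiF, if_pos hb, mul_div_assoc', mul_comm, mul_div_assoc, div_self hb, mul_one]
    rcases le_total (a + b ^ 2) 0 with h | h
    · rw [max_eq_right h, neg_zero, add_zero, min_eq_left (by linarith)]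
    · rw [max_eq_left h, min_eq_right (by linarith)]; ring
  · exact lt_of_le_of_lt (min_le_right _ _) (by linarith)

/-- With `u = φ_F(a,b)`: if `b ≠ 0` then
`a + b·u = min{a, -b²} < 0`; if `b = 0` and `a < 0` then `a + b·u = a < 0`;
consequently whenever `b = 0 → a < 0`, one has `a + b·u < 0`. -/
theorem stmt_4 (a b : ℝ) :
    (b ≠ 0 → a + b * phiF a b = min a (-b ^ 2) ∧ min a (-b ^ 2) < 0) ∧
    (b = 0 → a < 0 → a + b * phiF a b = a ∧ a < 0) ∧
    ((b = 0 → a < 0) → a + b * phiF a b < 0) := by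
  refine ⟨key a b, fun hb ha => ⟨by simp [hb], ha⟩, fun h => ?_⟩
  by_cases hb : b = 0
  · simpa [hb] using h hb
  · obtain ⟨he, hlt⟩ := key a b hb
    rw [he]; exact hlt
end

section
/- For all real numbers a, b: if b > 0 then φ_S(a,b) < 0 and φ_S(a,b) < -a/b; and if b < 0 then φ_S(a,b) > 0 and φ_S(a,b) > -a/b. -/
lemma pos_key (a b : ℝ) (hb : b ≠ 0) : 0 < a + Real.sqrt (a ^ 2 + b ^ 4) := by
  have h4 : (0:ℝ) < b ^ 4 := by positivity
  have h1 : |a| < Real.sqrt (a ^ 2 + b ^ 4) := by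
    have : Real.sqrt (a ^ 2) < Real.sqrt (a ^ 2 + b ^ 4) :=
      Real.sqrt_lt_sqrt (by positivity) (by linarith)
    simpa [Real.sqrt_sq_eq_abs] using this
  have := neg_abs_le a
  linarith

/-- If `b > 0` then `φ_S(a,b) < 0` and `φ_S(a,b) < -a/b`;
if `b < 0` then `φ_S(a,b) > 0` and `φ_S(a,b) > -a/b`. -/
theorem stmt_5 (a b : ℝ) :
    (0 < b → phiS a b < 0 ∧ phiS a b < -a / b) ∧
    (b < 0 → 0 < phiS a b ∧ -a / b < phiS a b) := by
  constructor
  · intro hb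
    have hb' : b ≠ 0 := ne_of_gt hb
    have hk := pos_key a b hb'
    have hs : 0 < Real.sqrt (a ^ 2 + b ^ 4) := Real.sqrt_pos.mpr (by positivity)
    rw [phiS, if_pos hb']
    constructor
    · exact div_neg_of_neg_of_pos (by linarith) hb
    · rw [div_lt_div_iff₀ hb hb]
      nlinarith
  · intro hb
    have hb' : b ≠ 0 := ne_of_lt hb
    have hk := pos_key a b hb'
    have hs : 0 < Real.sqrt (a ^ 2 + b ^ 4) := Real.sqrt_pos.mpr (by positivity)
    rw [phiS, if_pos hb']
    constructor
    · exact div_pos_of_neg_of_neg (by linarith) hb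
    · exact div_lt_div_of_neg_of_lt hb (by linarith)
end

section
/- For all real numbers a, b: if b > 0 then φ_F(a,b) ≤ 0 and φ_F(a,b) < -a/b; and if b < 0 then φ_F(a,b) ≥ 0 and φ_F(a,b) > -a/b. -/
/-- If `b > 0` then `φ_F(a,b) ≤ 0` and `φ_F(a,b) < -a/b`;
if `b < 0` then `φ_F(a,b) ≥ 0` and `φ_F(a,b) > -a/b`. -/
theorem stmt_6 (a b : ℝ) :
    (0 < b → phiF a b ≤ 0 ∧ phiF a b < -a / b) ∧
    (b < 0 → 0 ≤ phiF a b ∧ -a / b < phiF a b) := by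
  have hlt : a < max (a + b ^ 2) 0 → True := fun _ => trivial
  constructor
  · intro hb
    have hb' : b ≠ 0 := ne_of_gt hb
    have key : a < max (a + b ^ 2) 0 :=
      lt_of_lt_of_le (by nlinarith) (le_max_left _ _)
    unfold phiF
    rw [if_pos hb']
    constructor
    · apply div_nonpos_of_nonpos_of_nonneg
      · simp [le_max_right]
      · exact hb.le
    · rw [div_lt_div_iff₀ hb hb]
      nlinarith
  · intro hb
    have hb' : b ≠ 0 := ne_of_lt hb
    have key : a < max (a + b ^ 2) 0 :=
      lt_of_lt_of_le (by nlinarith) (le_max_left _ _)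
    unfold phiF
    rw [if_pos hb']
    constructor
    · apply div_nonneg_of_nonpos (by simp [le_max_right]) hb.le
    · rw [div_lt_div_right_of_neg hb]
      nlinarith
end

section
/- The map φ_S is continuous on the set D = {(a,b) ∈ ℝ² : b ≠ 0 or a < 0}; that is, φ_S restricted to D is continuous at every point of D. -/
lemma phiS_eq_of_neg {a b : ℝ} (ha : a < 0) :
    phiS a b = -b ^ 3 / (Real.sqrt (a ^ 2 + b ^ 4) - a) := by
  have hs : Real.sqrt (a ^ 2 + b ^ 4) ≥ -a := by
    have : Real.sqrt (a ^ 2) ≤ Real.sqrt (a ^ 2 + b ^ 4) :=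
      Real.sqrt_le_sqrt (by nlinarith [sq_nonneg (b ^ 2)])
    have h2 : Real.sqrt (a ^ 2) = -a := by
      rw [Real.sqrt_sq_eq_abs, abs_of_neg ha]
    linarith
  have hden : Real.sqrt (a ^ 2 + b ^ 4) - a > 0 := by linarith
  have hsq : Real.sqrt (a ^ 2 + b ^ 4) ^ 2 = a ^ 2 + b ^ 4 :=
    Real.sq_sqrt (by positivity)
  unfold phiS
  by_cases hb : b = 0
  · simp [hb]
  · simp only [hb, if_pos, ne_eq, not_false_eq_true]
    field_simp
    nlinarith [hsq]

/-- `φ_S` is continuous on the set `D = {(a,b) : b ≠ 0 ∨ a < 0}`. -/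
theorem stmt_7 :
    ContinuousOn (fun p : ℝ × ℝ => phiS p.1 p.2)
      {p : ℝ × ℝ | p.2 ≠ 0 ∨ p.1 < 0} := by
  intro p hp
  rcases hp with hb | ha
  · -- near p, second coord nonzero
    have hev : ∀ᶠ q : ℝ × ℝ in nhds p,
        (fun q : ℝ × ℝ => phiS q.1 q.2) q
          = -(q.1 + Real.sqrt (q.1 ^ 2 + q.2 ^ 4)) / q.2 := by
      have : ∀ᶠ q : ℝ × ℝ in nhds p, q.2 ≠ 0 :=
        (continuous_snd.continuousAt (x := p)).eventually_ne hb
      filter_upwards [this] with q hq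
      simp [phiS, hq]
    have hc : ContinuousAt
        (fun q : ℝ × ℝ => -(q.1 + Real.sqrt (q.1 ^ 2 + q.2 ^ 4)) / q.2) p := by
      apply ContinuousAt.div
      · exact (((continuous_fst.pow 2).add (continuous_snd.pow 4)).sqrt.neg.sub
          continuous_fst).continuousAt.congr (by
            filter_upwards with q; simp only [Pi.sub_apply, Pi.neg_apply, Pi.add_apply, Pi.pow_apply]; ring)
      · exact continuous_snd.continuousAt
      · exact hb
    exact (hc.congr (hev.mono fun q h => h.symm)).continuousWithinAt
  · have hev : ∀ᶠ q : ℝ × ℝ in nhds p,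
        (fun q : ℝ × ℝ => phiS q.1 q.2) q
          = -q.2 ^ 3 / (Real.sqrt (q.1 ^ 2 + q.2 ^ 4) - q.1) := by
      have : ∀ᶠ q : ℝ × ℝ in nhds p, q.1 < 0 :=
        (continuous_fst.continuousAt (x := p)).eventually_lt continuousAt_const ha
      filter_upwards [this] with q hq
      exact phiS_eq_of_neg hq
    have hden : Real.sqrt (p.1 ^ 2 + p.2 ^ 4) - p.1 ≠ 0 := by
      have : Real.sqrt (p.1 ^ 2) ≤ Real.sqrt (p.1 ^ 2 + p.2 ^ 4) :=
        Real.sqrt_le_sqrt (by nlinarith [sq_nonneg (p.2 ^ 2)])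
      have h2 : Real.sqrt (p.1 ^ 2) = -p.1 := by
        rw [Real.sqrt_sq_eq_abs, abs_of_neg ha]
      nlinarith
    have hc : ContinuousAt
        (fun q : ℝ × ℝ => -q.2 ^ 3 / (Real.sqrt (q.1 ^ 2 + q.2 ^ 4) - q.1)) p := by
      apply ContinuousAt.div
      · exact ((continuous_snd.pow 3).neg).continuousAt
      · exact (((continuous_fst.pow 2).add (continuous_snd.pow 4)).sqrt.sub
          continuous_fst).continuousAt
      · exact hden
    exact (hc.congr (hev.mono fun q h => h.symm)).continuousWithinAt
end

section
/- The map φ_F is continuous on the set D = {(a,b) ∈ ℝ² : b ≠ 0 or a < 0}; that is, φ_F restricted to D is continuous at every point of D. -/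
/-- `φ_F` is continuous on the set `D = {(a,b) : b ≠ 0 ∨ a < 0}`. -/
theorem stmt_8 :
    ContinuousOn (fun p : ℝ × ℝ => phiF p.1 p.2)
      {p : ℝ × ℝ | p.2 ≠ 0 ∨ p.1 < 0} := by
  intro p hp
  apply ContinuousAt.continuousWithinAt
  rcases eq_or_ne p.2 0 with hb | hb
  · have ha : p.1 < 0 := hp.resolve_left (by simp [hb])
    have hU : (fun q : ℝ × ℝ => phiF q.1 q.2) =ᶠ[nhds p] fun _ => (0 : ℝ) := by
      have hopen : IsOpen {q : ℝ × ℝ | q.1 + q.2 ^ 2 < 0} :=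
        isOpen_lt (by continuity) continuous_const
      have hmem : p ∈ {q : ℝ × ℝ | q.1 + q.2 ^ 2 < 0} := by
        simp [Set.mem_setOf_eq, hb, ha]
      filter_upwards [hopen.mem_nhds hmem] with q hq
      by_cases h : q.2 = 0 <;> simp [phiF, h, max_eq_right (le_of_lt hq)]
    exact (continuousAt_congr hU).mpr continuousAt_const
  · have hg : ContinuousAt (fun q : ℝ × ℝ => -(max (q.1 + q.2 ^ 2) 0) / q.2) p := by
      apply ContinuousAt.div
      · exact (Continuous.max (by continuity) continuous_const).neg.continuousAt
      · exact continuousAt_snd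
      · exact hb
    have hU : (fun q : ℝ × ℝ => phiF q.1 q.2)
        =ᶠ[nhds p] fun q : ℝ × ℝ => -(max (q.1 + q.2 ^ 2) 0) / q.2 := by
      have hopen : IsOpen {q : ℝ × ℝ | q.2 ≠ 0} :=
        isOpen_ne_fun continuous_snd continuous_const
      filter_upwards [hopen.mem_nhds hb] with q hq
      simp [phiF, hq]
    exact (continuousAt_congr hU).mpr hg
end

section
/- Let a₀, b₀, a₁, b₁ be real numbers with b₀ ≥ 0, b₁ ≥ 0, (b₀, b₁) ≠ (0,0), and such that b₀ = 0 implies a₀ < 0 and b₁ = 0 implies a₁ < 0. Then the input u = min{φ_S(a₀,b₀), φ_S(a₁,b₁)} satisfies a₀ + b₀·u < 0 and a₁ + b₁·u < 0. -/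
lemma phiS_key (a b : ℝ) (hb : b ≠ 0) : a + b * phiS a b < 0 := by
  have h4 : 0 < a ^ 2 + b ^ 4 := by positivity
  have hs : 0 < Real.sqrt (a ^ 2 + b ^ 4) := Real.sqrt_pos.mpr h4
  rw [phiS, if_pos hb, mul_div_cancel₀ _ hb]
  linarith

/-- Case 1: `b₀ ≥ 0`, `b₁ ≥ 0`, `(b₀,b₁) ≠ (0,0)`; the input
`u = min{φ_S(a₀,b₀), φ_S(a₁,b₁)}` satisfies both strict inequalities. -/
theorem stmt_9 (a0 b0 a1 b1 : ℝ) (hb0 : 0 ≤ b0) (hb1 : 0 ≤ b1)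
    (hne : (b0, b1) ≠ (0, 0))
    (h0 : b0 = 0 → a0 < 0) (h1 : b1 = 0 → a1 < 0) :
    a0 + b0 * min (phiS a0 b0) (phiS a1 b1) < 0 ∧
    a1 + b1 * min (phiS a0 b0) (phiS a1 b1) < 0 := by
  constructor
  · rcases eq_or_lt_of_le hb0 with h | h
    · simpa [← h] using h0 h.symm
    · have key := phiS_key a0 b0 (ne_of_gt h)
      have : b0 * min (phiS a0 b0) (phiS a1 b1) ≤ b0 * phiS a0 b0 :=
        mul_le_mul_of_nonneg_left (min_le_left _ _) hb0
      linarith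
  · rcases eq_or_lt_of_le hb1 with h | h
    · simpa [← h] using h1 h.symm
    · have key := phiS_key a1 b1 (ne_of_gt h)
      have : b1 * min (phiS a0 b0) (phiS a1 b1) ≤ b1 * phiS a1 b1 :=
        mul_le_mul_of_nonneg_left (min_le_right _ _) hb1
      linarith
end

section
/- The map K_l is continuous on the set D_c = {(a₀,b₀,a₁,b₁) ∈ ℝ⁴ : (b₀ = 0 implies a₀ < 0), (b₁ = 0 implies a₁ < 0), and (b₀b₁ < 0 implies -a_j/b_j < -a_i/b_i, where i ∈ {0,1} is the index with b_i > 0 and j the index with b_j < 0)}; that is, K_l restricted to D_c is continuous at every point of D_c. -/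
open Filter Topology Set

/-- Logistic weighting function `λ(z) = 1/(1+e^{-z})`. -/
noncomputable def logisticW (z : ℝ) : ℝ := 1 / (1 + Real.exp (-z))

/-- The blended safe-stabilizing feedback law `K_l` (built from Sontag's formula),
as a function of the CLF data `(a₀,b₀)` and CBF data `(a₁,b₁)`.
In the region `b₀·b₁ < 0`, `i` denotes the index with `b_i > 0` and `j` the index
with `b_j < 0`, and `Δ = -a₀/b₀ - a₁/b₁`. -/
noncomputable def Kl (a0 b0 a1 b1 : ℝ) : ℝ :=
  if b0 * b1 < 0 then
    if 0 < b0 then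
      -- i = 0, j = 1
      (1 - logisticW (-a0 / b0 - a1 / b1)) * max (phiS a0 b0) (-a1 / b1)
        + logisticW (-a0 / b0 - a1 / b1) * min (phiS a1 b1) (-a0 / b0)
    else
      -- i = 1, j = 0
      (1 - logisticW (-a0 / b0 - a1 / b1)) * max (phiS a1 b1) (-a0 / b0)
        + logisticW (-a0 / b0 - a1 / b1) * min (phiS a0 b0) (-a1 / b1)
  else if 0 ≤ b0 ∧ 0 ≤ b1 then min (phiS a0 b0) (phiS a1 b1)
  else max (phiS a0 b0) (phiS a1 b1)

/-- The compatible-data set `D_c`: points `(a₀,b₀,a₁,b₁)` satisfying the pointwise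
CLF and CBF conditions and the compatibility condition. -/
def Dc : Set (ℝ × ℝ × ℝ × ℝ) :=
  {p | (p.2.1 = 0 → p.1 < 0) ∧ (p.2.2.2 = 0 → p.2.2.1 < 0) ∧
       (p.2.1 * p.2.2.2 < 0 →
         (0 < p.2.1 → -p.2.2.1 / p.2.2.2 < -p.1 / p.2.1) ∧
         (0 < p.2.2.2 → -p.1 / p.2.1 < -p.2.2.1 / p.2.2.2))}

lemma phiS_zero (a : ℝ) : phiS a 0 = 0 := by simp [phiS]

lemma abs_le_sqrt' (a b : ℝ) : |a| ≤ Real.sqrt (a ^ 2 + b ^ 4) := by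
  have h1 : Real.sqrt (a ^ 2) ≤ Real.sqrt (a ^ 2 + b ^ 4) :=
    Real.sqrt_le_sqrt (le_add_of_nonneg_right (by positivity))
  rwa [Real.sqrt_sq_eq_abs] at h1

lemma num_nonneg' (a b : ℝ) : 0 ≤ a + Real.sqrt (a ^ 2 + b ^ 4) := by
  have := abs_le_sqrt' a b
  have := neg_abs_le a
  linarith

lemma phiS_nonpos {a b : ℝ} (hb : 0 < b) : phiS a b ≤ 0 := by
  unfold phiS
  rw [if_pos hb.ne']
  apply div_nonpos_of_nonpos_of_nonneg _ hb.le
  have := num_nonneg' a b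
  linarith

lemma phiS_nonneg {a b : ℝ} (hb : b < 0) : 0 ≤ phiS a b := by
  unfold phiS
  rw [if_pos hb.ne]
  rw [div_nonneg_iff]
  right
  constructor
  · have := num_nonneg' a b; linarith
  · exact hb.le

lemma denom_pos {a b : ℝ} (h : b ≠ 0 ∨ a < 0) : 0 < Real.sqrt (a ^ 2 + b ^ 4) - a := by
  rcases le_or_gt 0 a with ha | ha
  · have hb : b ≠ 0 := by
      rcases h with h | h
      · exact h
      · exact absurd h (not_lt.2 ha)
    have hb4 : 0 < b ^ 4 := by positivity
    have h2 : Real.sqrt (a ^ 2) < Real.sqrt (a ^ 2 + b ^ 4) :=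
      Real.sqrt_lt_sqrt (by positivity) (by linarith)
    rw [Real.sqrt_sq_eq_abs, abs_of_nonneg ha] at h2
    linarith
  · have := Real.sqrt_nonneg (a ^ 2 + b ^ 4)
    linarith

lemma phiS_eq {a b : ℝ} (h : b ≠ 0 ∨ a < 0) :
    phiS a b = -(b ^ 3) / (Real.sqrt (a ^ 2 + b ^ 4) - a) := by
  have hd := denom_pos h
  by_cases hb : b = 0
  · subst hb; simp [phiS]
  · unfold phiS
    rw [if_pos hb, div_eq_div_iff hb hd.ne']
    have hs : Real.sqrt (a ^ 2 + b ^ 4) ^ 2 = a ^ 2 + b ^ 4 := Real.sq_sqrt (by positivity)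
    nlinarith [hs]

lemma phiS_continuousAt {a b : ℝ} (h : b ≠ 0 ∨ a < 0) :
    ContinuousAt (fun p : ℝ × ℝ => phiS p.1 p.2) (a, b) := by
  have hg : ContinuousAt
      (fun p : ℝ × ℝ => -(p.2 ^ 3) / (Real.sqrt (p.1 ^ 2 + p.2 ^ 4) - p.1)) (a, b) := by
    apply ContinuousAt.div
    · fun_prop
    · exact ((Real.continuous_sqrt.comp (by fun_prop)).sub continuous_fst).continuousAt
    · exact (denom_pos h).ne'
  apply hg.congr
  have hU : IsOpen {p : ℝ × ℝ | p.2 ≠ 0 ∨ p.1 < 0} :=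
    (isOpen_ne_fun continuous_snd continuous_const).union
      (isOpen_lt continuous_fst continuous_const)
  filter_upwards [hU.mem_nhds h] with q hq
  exact (phiS_eq hq).symm

lemma logisticW_continuous : Continuous logisticW := by
  unfold logisticW
  apply continuous_const.div
  · fun_prop
  · intro z
    have := Real.exp_pos (-z)
    positivity

lemma logisticW_nonneg (z : ℝ) : 0 ≤ logisticW z := by
  unfold logisticW
  have := Real.exp_pos (-z)
  positivity

lemma logisticW_le_one (z : ℝ) : logisticW z ≤ 1 := by
  unfold logisticW
  have := Real.exp_pos (-z)
  rw [div_le_one (by linarith)]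
  linarith

lemma logisticW_atBot : Tendsto logisticW atBot (𝓝 0) := by
  have h1 : Tendsto (fun z : ℝ => 1 + Real.exp (-z)) atBot atTop :=
    tendsto_atTop_add_const_left _ 1 (Real.tendsto_exp_atTop.comp tendsto_neg_atBot_atTop)
  have h2 := h1.inv_tendsto_atTop
  have h3 : logisticW = (fun z : ℝ => 1 + Real.exp (-z))⁻¹ := by
    funext z
    simp [logisticW, one_div]
  rw [h3]
  exact h2

lemma logisticW_atTop : Tendsto logisticW atTop (𝓝 1) := by
  have h1 : Tendsto (fun z : ℝ => 1 + Real.exp (-z)) atTop (𝓝 1) := by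
    have h : Tendsto (fun z : ℝ => Real.exp (-z)) atTop (𝓝 0) :=
      Real.tendsto_exp_atBot.comp tendsto_neg_atTop_atBot
    simpa using tendsto_const_nhds.add h
  have h2 := h1.inv₀ (by norm_num)
  have h3 : logisticW = fun z : ℝ => (1 + Real.exp (-z))⁻¹ := by
    funext z
    simp [logisticW, one_div]
  rw [h3]
  simpa using h2

lemma tendsto_inv_zero_atBot : Tendsto (fun x : ℝ => x⁻¹) (𝓝[<] (0:ℝ)) atBot := by
  have hneg : Tendsto (fun x : ℝ => -x) (𝓝[<] (0:ℝ)) (𝓝[>] (0:ℝ)) := by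
    rw [tendsto_nhdsWithin_iff]
    constructor
    · simpa using (continuous_neg.tendsto (0:ℝ)).mono_left nhdsWithin_le_nhds
    · filter_upwards [self_mem_nhdsWithin] with x hx
      simpa using hx
  have h1 := tendsto_inv_nhdsGT_zero.comp hneg
  have h2 : Tendsto (fun x : ℝ => -(-x)⁻¹) (𝓝[<] (0:ℝ)) atBot :=
    tendsto_neg_atTop_atBot.comp h1
  refine h2.congr fun x => ?_
  rw [inv_neg, neg_neg]

-- tendsto helpers
lemma tendsto_max_atBot {α : Type*} {l : Filter α} {X Y : α → ℝ} {c : ℝ}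
    (hX : Tendsto X l (𝓝 c)) (hY : Tendsto Y l atBot) :
    Tendsto (fun q => max (X q) (Y q)) l (𝓝 c) := by
  refine Tendsto.congr' ?_ hX
  filter_upwards [hY.eventually (eventually_le_atBot (c - 1)),
    hX.eventually (lt_mem_nhds (show c - 1 < c by linarith))] with q h1 h2
  exact (max_eq_left (h1.trans h2.le)).symm

lemma tendsto_min_atTop {α : Type*} {l : Filter α} {X Y : α → ℝ} {c : ℝ}
    (hX : Tendsto X l (𝓝 c)) (hY : Tendsto Y l atTop) :
    Tendsto (fun q => min (X q) (Y q)) l (𝓝 c) := by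
  refine Tendsto.congr' ?_ hX
  filter_upwards [hY.eventually (eventually_ge_atTop (c + 1)),
    hX.eventually (gt_mem_nhds (show c < c + 1 by linarith))] with q h1 h2
  exact (min_eq_left (h2.le.trans h1)).symm



lemma tendsto_neg_div_atBot {α : Type*} {l : Filter α} {A B : α → ℝ} {a : ℝ} (ha : a < 0)
    (hA : Tendsto A l (𝓝 a)) (hB : Tendsto B l (𝓝[<] (0:ℝ))) :
    Tendsto (fun q => -A q / B q) l atBot := by
  have h1 : Tendsto (fun q => (B q)⁻¹) l atBot := tendsto_inv_zero_atBot.comp hB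
  have h2 : Tendsto (fun q => -A q) l (𝓝 (-a)) := hA.neg
  have h3 := Tendsto.pos_mul_atBot (show (0:ℝ) < -a by linarith) h2 h1
  exact h3.congr fun q => (div_eq_mul_inv _ _).symm

lemma tendsto_neg_div_atTop {α : Type*} {l : Filter α} {A B : α → ℝ} {a : ℝ} (ha : a < 0)
    (hA : Tendsto A l (𝓝 a)) (hB : Tendsto B l (𝓝[>] (0:ℝ))) :
    Tendsto (fun q => -A q / B q) l atTop := by
  have h1 : Tendsto (fun q => (B q)⁻¹) l atTop := tendsto_inv_nhdsGT_zero.comp hB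
  have h2 : Tendsto (fun q => -A q) l (𝓝 (-a)) := hA.neg
  have h3 := Tendsto.pos_mul_atTop (show (0:ℝ) < -a by linarith) h2 h1
  exact h3.congr fun q => (div_eq_mul_inv _ _).symm

-- branch lemmas
lemma Kl_eq_blend0 {a0 b0 a1 b1 : ℝ} (h0 : 0 < b0) (h1 : b1 < 0) :
    Kl a0 b0 a1 b1 =
      (1 - logisticW (-a0 / b0 - a1 / b1)) * max (phiS a0 b0) (-a1 / b1)
        + logisticW (-a0 / b0 - a1 / b1) * min (phiS a1 b1) (-a0 / b0) := by
  unfold Kl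
  rw [if_pos (mul_neg_of_pos_of_neg h0 h1), if_pos h0]

lemma Kl_eq_blend1 {a0 b0 a1 b1 : ℝ} (h0 : b0 < 0) (h1 : 0 < b1) :
    Kl a0 b0 a1 b1 =
      (1 - logisticW (-a0 / b0 - a1 / b1)) * max (phiS a1 b1) (-a0 / b0)
        + logisticW (-a0 / b0 - a1 / b1) * min (phiS a0 b0) (-a1 / b1) := by
  unfold Kl
  rw [if_pos (mul_neg_of_neg_of_pos h0 h1), if_neg (not_lt.2 h0.le)]

lemma Kl_eq_min {a0 b0 a1 b1 : ℝ} (h0 : 0 ≤ b0) (h1 : 0 ≤ b1) :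
    Kl a0 b0 a1 b1 = min (phiS a0 b0) (phiS a1 b1) := by
  unfold Kl
  rw [if_neg (not_lt.2 (mul_nonneg h0 h1)), if_pos ⟨h0, h1⟩]

lemma Kl_eq_max {a0 b0 a1 b1 : ℝ} (h0 : b0 ≤ 0) (h1 : b1 ≤ 0) :
    Kl a0 b0 a1 b1 = max (phiS a0 b0) (phiS a1 b1) := by
  unfold Kl
  rw [if_neg (not_lt.2 (mul_nonneg_of_nonpos_of_nonpos h0 h1))]
  by_cases hc : 0 ≤ b0 ∧ 0 ≤ b1
  · have hb0 : b0 = 0 := le_antisymm h0 hc.1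
    have hb1 : b1 = 0 := le_antisymm h1 hc.2
    subst hb0; subst hb1
    rw [if_pos hc, phiS_zero, phiS_zero]
    simp
  · rw [if_neg hc]

lemma Kl_symm (a0 b0 a1 b1 : ℝ) : Kl a0 b0 a1 b1 = Kl a1 b1 a0 b0 := by
  unfold Kl
  by_cases h : b0 * b1 < 0
  · have h' : b1 * b0 < 0 := by rw [mul_comm]; exact h
    rw [if_pos h, if_pos h']
    by_cases h0 : 0 < b0
    · have h1 : ¬ 0 < b1 := by
        intro h1
        exact absurd (mul_pos h0 h1) (not_lt.2 h.le)
      rw [if_pos h0, if_neg h1]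
      have e : -a1 / b1 - a0 / b0 = -a0 / b0 - a1 / b1 := by ring
      rw [e]
    · have h1 : 0 < b1 := by
        rcases lt_trichotomy b1 0 with hh | hh | hh
        · nlinarith [not_lt.1 h0]
        · rw [hh, mul_zero] at h; linarith
        · exact hh
      rw [if_neg h0, if_pos h1]
      have e : -a1 / b1 - a0 / b0 = -a0 / b0 - a1 / b1 := by ring
      rw [e]
  · have h' : ¬ b1 * b0 < 0 := by rw [mul_comm]; exact h
    rw [if_neg h, if_neg h']
    by_cases hc : 0 ≤ b0 ∧ 0 ≤ b1
    · rw [if_pos hc, if_pos ⟨hc.2, hc.1⟩, min_comm]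
    · rw [if_neg hc, if_neg (fun hh => hc ⟨hh.2, hh.1⟩), max_comm]

noncomputable def K4 (q : ℝ × ℝ × ℝ × ℝ) : ℝ := Kl q.1 q.2.1 q.2.2.1 q.2.2.2

lemma isOpen_b0_pos : IsOpen {q : ℝ × ℝ × ℝ × ℝ | 0 < q.2.1} :=
  isOpen_lt continuous_const (by fun_prop : Continuous fun q : ℝ × ℝ × ℝ × ℝ => q.2.1)
lemma isOpen_b0_neg : IsOpen {q : ℝ × ℝ × ℝ × ℝ | q.2.1 < 0} :=
  isOpen_lt (by fun_prop : Continuous fun q : ℝ × ℝ × ℝ × ℝ => q.2.1) continuous_const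
lemma isOpen_b1_pos : IsOpen {q : ℝ × ℝ × ℝ × ℝ | 0 < q.2.2.2} :=
  isOpen_lt continuous_const (by fun_prop : Continuous fun q : ℝ × ℝ × ℝ × ℝ => q.2.2.2)
lemma isOpen_b1_neg : IsOpen {q : ℝ × ℝ × ℝ × ℝ | q.2.2.2 < 0} :=
  isOpen_lt (by fun_prop : Continuous fun q : ℝ × ℝ × ℝ × ℝ => q.2.2.2) continuous_const

lemma contAt_phi0 {p : ℝ × ℝ × ℝ × ℝ} (h : p.2.1 ≠ 0 ∨ p.1 < 0) :
    ContinuousAt (fun q : ℝ × ℝ × ℝ × ℝ => phiS q.1 q.2.1) p := by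
  have hf : ContinuousAt (fun q : ℝ × ℝ × ℝ × ℝ => (q.1, q.2.1)) p :=
    Continuous.continuousAt (by fun_prop)
  exact ContinuousAt.comp (f := fun q : ℝ × ℝ × ℝ × ℝ => (q.1, q.2.1)) (x := p)
    (phiS_continuousAt h) hf

lemma contAt_phi1 {p : ℝ × ℝ × ℝ × ℝ} (h : p.2.2.2 ≠ 0 ∨ p.2.2.1 < 0) :
    ContinuousAt (fun q : ℝ × ℝ × ℝ × ℝ => phiS q.2.2.1 q.2.2.2) p := by
  have hf : ContinuousAt (fun q : ℝ × ℝ × ℝ × ℝ => (q.2.2.1, q.2.2.2)) p :=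
    Continuous.continuousAt (by fun_prop)
  exact ContinuousAt.comp (f := fun q : ℝ × ℝ × ℝ × ℝ => (q.2.2.1, q.2.2.2)) (x := p)
    (phiS_continuousAt h) hf

lemma caseA {a0 b0 a1 b1 : ℝ} (h0 : 0 < b0) (h1 : 0 < b1) :
    ContinuousAt K4 (a0, b0, a1, b1) := by
  have hU : IsOpen {q : ℝ × ℝ × ℝ × ℝ | 0 < q.2.1 ∧ 0 < q.2.2.2} :=
    isOpen_b0_pos.inter isOpen_b1_pos
  have hc : ContinuousAt (fun q : ℝ × ℝ × ℝ × ℝ =>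
      min (phiS q.1 q.2.1) (phiS q.2.2.1 q.2.2.2)) (a0, b0, a1, b1) :=
    (contAt_phi0 (Or.inl h0.ne')).min (contAt_phi1 (Or.inl h1.ne'))
  apply hc.congr
  filter_upwards [hU.mem_nhds ⟨h0, h1⟩] with q hq
  exact (Kl_eq_min hq.1.le hq.2.le).symm

lemma caseB {a0 b0 a1 b1 : ℝ} (h0 : b0 < 0) (h1 : b1 < 0) :
    ContinuousAt K4 (a0, b0, a1, b1) := by
  have hU : IsOpen {q : ℝ × ℝ × ℝ × ℝ | q.2.1 < 0 ∧ q.2.2.2 < 0} :=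
    isOpen_b0_neg.inter isOpen_b1_neg
  have hc : ContinuousAt (fun q : ℝ × ℝ × ℝ × ℝ =>
      max (phiS q.1 q.2.1) (phiS q.2.2.1 q.2.2.2)) (a0, b0, a1, b1) :=
    (contAt_phi0 (Or.inl h0.ne)).max (contAt_phi1 (Or.inl h1.ne))
  apply hc.congr
  filter_upwards [hU.mem_nhds ⟨h0, h1⟩] with q hq
  exact (Kl_eq_max hq.1.le hq.2.le).symm

lemma blend0_contAt {p : ℝ × ℝ × ℝ × ℝ} (h0 : p.2.1 ≠ 0) (h1 : p.2.2.2 ≠ 0) :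
    ContinuousAt (fun q : ℝ × ℝ × ℝ × ℝ =>
      (1 - logisticW (-q.1 / q.2.1 - q.2.2.1 / q.2.2.2)) * max (phiS q.1 q.2.1) (-q.2.2.1 / q.2.2.2)
        + logisticW (-q.1 / q.2.1 - q.2.2.1 / q.2.2.2)
          * min (phiS q.2.2.1 q.2.2.2) (-q.1 / q.2.1)) p := by
  have hm0 : ContinuousAt (fun q : ℝ × ℝ × ℝ × ℝ => -q.1 / q.2.1) p :=
    ContinuousAt.div (by fun_prop) (by fun_prop) h0
  have hm1 : ContinuousAt (fun q : ℝ × ℝ × ℝ × ℝ => -q.2.2.1 / q.2.2.2) p :=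
    ContinuousAt.div (by fun_prop) (by fun_prop) h1
  have hd : ContinuousAt (fun q : ℝ × ℝ × ℝ × ℝ => -q.1 / q.2.1 - q.2.2.1 / q.2.2.2) p :=
    hm0.sub (ContinuousAt.div (by fun_prop) (by fun_prop) h1)
  have hw : ContinuousAt
      (fun q : ℝ × ℝ × ℝ × ℝ => logisticW (-q.1 / q.2.1 - q.2.2.1 / q.2.2.2)) p :=
    logisticW_continuous.continuousAt.comp hd
  exact ((continuousAt_const.sub hw).mul ((contAt_phi0 (Or.inl h0)).max hm1)).add
    (hw.mul ((contAt_phi1 (Or.inl h1)).min hm0))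

lemma caseC {a0 b0 a1 b1 : ℝ} (h0 : 0 < b0) (h1 : b1 < 0) :
    ContinuousAt K4 (a0, b0, a1, b1) := by
  have hU : IsOpen {q : ℝ × ℝ × ℝ × ℝ | 0 < q.2.1 ∧ q.2.2.2 < 0} :=
    isOpen_b0_pos.inter isOpen_b1_neg
  apply (blend0_contAt (p := (a0, b0, a1, b1)) h0.ne' h1.ne).congr
  filter_upwards [hU.mem_nhds ⟨h0, h1⟩] with q hq
  exact (Kl_eq_blend0 hq.1 hq.2).symm

lemma tendsto_b1_neg {a0 b0 a1 : ℝ} {T : Set (ℝ × ℝ × ℝ × ℝ)}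
    (hT : T ⊆ {q | q.2.2.2 < 0}) :
    Tendsto (fun q : ℝ × ℝ × ℝ × ℝ => q.2.2.2) (𝓝[T] (a0, b0, a1, 0)) (𝓝[<] (0:ℝ)) := by
  rw [tendsto_nhdsWithin_iff]
  constructor
  · have h : Tendsto (fun q : ℝ × ℝ × ℝ × ℝ => q.2.2.2)
        (𝓝 ((a0, b0, a1, (0:ℝ)) : ℝ × ℝ × ℝ × ℝ)) (𝓝 0) := by
      simpa using ((by fun_prop : Continuous fun q : ℝ × ℝ × ℝ × ℝ => q.2.2.2).tendsto
        ((a0, b0, a1, (0:ℝ)) : ℝ × ℝ × ℝ × ℝ))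
    exact h.mono_left nhdsWithin_le_nhds
  · filter_upwards [self_mem_nhdsWithin] with q hq
    exact hT hq

lemma tendsto_b1_pos {a0 b0 a1 : ℝ} {T : Set (ℝ × ℝ × ℝ × ℝ)}
    (hT : T ⊆ {q | 0 < q.2.2.2}) :
    Tendsto (fun q : ℝ × ℝ × ℝ × ℝ => q.2.2.2) (𝓝[T] (a0, b0, a1, 0)) (𝓝[>] (0:ℝ)) := by
  rw [tendsto_nhdsWithin_iff]
  constructor
  · have h : Tendsto (fun q : ℝ × ℝ × ℝ × ℝ => q.2.2.2)
        (𝓝 ((a0, b0, a1, (0:ℝ)) : ℝ × ℝ × ℝ × ℝ)) (𝓝 0) := by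
      simpa using ((by fun_prop : Continuous fun q : ℝ × ℝ × ℝ × ℝ => q.2.2.2).tendsto
        ((a0, b0, a1, (0:ℝ)) : ℝ × ℝ × ℝ × ℝ))
    exact h.mono_left nhdsWithin_le_nhds
  · filter_upwards [self_mem_nhdsWithin] with q hq
    exact hT hq

lemma tendsto_b0_neg {a0 a1 b1 : ℝ} {T : Set (ℝ × ℝ × ℝ × ℝ)}
    (hT : T ⊆ {q | q.2.1 < 0}) :
    Tendsto (fun q : ℝ × ℝ × ℝ × ℝ => q.2.1) (𝓝[T] (a0, 0, a1, b1)) (𝓝[<] (0:ℝ)) := by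
  rw [tendsto_nhdsWithin_iff]
  constructor
  · have h : Tendsto (fun q : ℝ × ℝ × ℝ × ℝ => q.2.1)
        (𝓝 ((a0, (0:ℝ), a1, b1) : ℝ × ℝ × ℝ × ℝ)) (𝓝 0) := by
      simpa using ((by fun_prop : Continuous fun q : ℝ × ℝ × ℝ × ℝ => q.2.1).tendsto
        ((a0, (0:ℝ), a1, b1) : ℝ × ℝ × ℝ × ℝ))
    exact h.mono_left nhdsWithin_le_nhds
  · filter_upwards [self_mem_nhdsWithin] with q hq
    exact hT hq

lemma tendsto_b0_pos {a0 a1 b1 : ℝ} {T : Set (ℝ × ℝ × ℝ × ℝ)}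
    (hT : T ⊆ {q | 0 < q.2.1}) :
    Tendsto (fun q : ℝ × ℝ × ℝ × ℝ => q.2.1) (𝓝[T] (a0, 0, a1, b1)) (𝓝[>] (0:ℝ)) := by
  rw [tendsto_nhdsWithin_iff]
  constructor
  · have h : Tendsto (fun q : ℝ × ℝ × ℝ × ℝ => q.2.1)
        (𝓝 ((a0, (0:ℝ), a1, b1) : ℝ × ℝ × ℝ × ℝ)) (𝓝 0) := by
      simpa using ((by fun_prop : Continuous fun q : ℝ × ℝ × ℝ × ℝ => q.2.1).tendsto
        ((a0, (0:ℝ), a1, b1) : ℝ × ℝ × ℝ × ℝ))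
    exact h.mono_left nhdsWithin_le_nhds
  · filter_upwards [self_mem_nhdsWithin] with q hq
    exact hT hq

lemma caseD {a0 b0 a1 : ℝ} (hb0 : 0 < b0) (ha1 : a1 < 0) :
    ContinuousAt K4 (a0, b0, a1, 0) := by
  have hKp : K4 (a0, b0, a1, 0) = phiS a0 b0 := by
    show Kl a0 b0 a1 0 = phiS a0 b0
    rw [Kl_eq_min hb0.le le_rfl, phiS_zero, min_eq_left (phiS_nonpos hb0)]
  unfold ContinuousAt
  rw [hKp, ← nhdsWithin_univ,
    show (univ : Set (ℝ × ℝ × ℝ × ℝ)) = {q | 0 ≤ q.2.2.2} ∪ {q | q.2.2.2 < 0} by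
      ext q; simp [le_or_gt],
    nhdsWithin_union, tendsto_sup]
  have hev0 : ∀ᶠ q : ℝ × ℝ × ℝ × ℝ in 𝓝 ((a0, b0, a1, (0:ℝ)) : ℝ × ℝ × ℝ × ℝ), 0 < q.2.1 :=
    isOpen_b0_pos.mem_nhds hb0
  have hΦ0 : ∀ (T : Set (ℝ × ℝ × ℝ × ℝ)), Tendsto (fun q : ℝ × ℝ × ℝ × ℝ => phiS q.1 q.2.1)
      (𝓝[T] (a0, b0, a1, 0)) (𝓝 (phiS a0 b0)) := fun T =>
    ((contAt_phi0 (p := (a0, b0, a1, 0)) (Or.inl hb0.ne')).tendsto).mono_left nhdsWithin_le_nhds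
  have hΦ1 : ∀ (T : Set (ℝ × ℝ × ℝ × ℝ)),
      Tendsto (fun q : ℝ × ℝ × ℝ × ℝ => phiS q.2.2.1 q.2.2.2)
      (𝓝[T] (a0, b0, a1, 0)) (𝓝 0) := by
    intro T
    have h := (contAt_phi1 (p := (a0, b0, a1, 0)) (Or.inr ha1)).tendsto
    rw [show phiS ((a0, b0, a1, (0:ℝ)) : ℝ × ℝ × ℝ × ℝ).2.2.1
        ((a0, b0, a1, (0:ℝ)) : ℝ × ℝ × ℝ × ℝ).2.2.2 = 0 from phiS_zero a1] at h
    exact h.mono_left nhdsWithin_le_nhds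
  constructor
  · -- b1 ≥ 0 : min branch
    have hmin : Tendsto (fun q : ℝ × ℝ × ℝ × ℝ => min (phiS q.1 q.2.1) (phiS q.2.2.1 q.2.2.2))
        (𝓝[{q : ℝ × ℝ × ℝ × ℝ | 0 ≤ q.2.2.2}] (a0, b0, a1, 0)) (𝓝 (min (phiS a0 b0) 0)) :=
      (hΦ0 _).min (hΦ1 _)
    rw [min_eq_left (phiS_nonpos hb0)] at hmin
    refine Tendsto.congr' ?_ hmin
    filter_upwards [hev0.filter_mono nhdsWithin_le_nhds, self_mem_nhdsWithin] with q h1 h2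
    exact (Kl_eq_min h1.le h2).symm
  · -- b1 < 0 : blend branch
    have hb1T := tendsto_b1_neg (a0 := a0) (b0 := b0) (a1 := a1)
      (T := {q : ℝ × ℝ × ℝ × ℝ | q.2.2.2 < 0}) (fun q hq => hq)
    have ha1T : Tendsto (fun q : ℝ × ℝ × ℝ × ℝ => q.2.2.1)
        (𝓝[{q : ℝ × ℝ × ℝ × ℝ | q.2.2.2 < 0}] (a0, b0, a1, 0)) (𝓝 a1) := by
      have h : Tendsto (fun q : ℝ × ℝ × ℝ × ℝ => q.2.2.1)
          (𝓝 ((a0, b0, a1, (0:ℝ)) : ℝ × ℝ × ℝ × ℝ)) (𝓝 a1) := by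
        simpa using ((by fun_prop : Continuous fun q : ℝ × ℝ × ℝ × ℝ => q.2.2.1).tendsto
          ((a0, b0, a1, (0:ℝ)) : ℝ × ℝ × ℝ × ℝ))
      exact h.mono_left nhdsWithin_le_nhds
    have hm1 : Tendsto (fun q : ℝ × ℝ × ℝ × ℝ => -q.2.2.1 / q.2.2.2)
        (𝓝[{q : ℝ × ℝ × ℝ × ℝ | q.2.2.2 < 0}] (a0, b0, a1, 0)) atBot :=
      tendsto_neg_div_atBot ha1 ha1T hb1T
    have hm0 : Tendsto (fun q : ℝ × ℝ × ℝ × ℝ => -q.1 / q.2.1)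
        (𝓝[{q : ℝ × ℝ × ℝ × ℝ | q.2.2.2 < 0}] (a0, b0, a1, 0)) (𝓝 (-a0 / b0)) := by
      have h : ContinuousAt (fun q : ℝ × ℝ × ℝ × ℝ => -q.1 / q.2.1) (a0, b0, a1, 0) :=
        ContinuousAt.div (by fun_prop) (by fun_prop) hb0.ne'
      exact h.tendsto.mono_left nhdsWithin_le_nhds
    have hΔ : Tendsto (fun q : ℝ × ℝ × ℝ × ℝ => -q.1 / q.2.1 - q.2.2.1 / q.2.2.2)
        (𝓝[{q : ℝ × ℝ × ℝ × ℝ | q.2.2.2 < 0}] (a0, b0, a1, 0)) atBot := by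
      have he : (fun q : ℝ × ℝ × ℝ × ℝ => -q.1 / q.2.1 - q.2.2.1 / q.2.2.2)
          = fun q : ℝ × ℝ × ℝ × ℝ => -q.1 / q.2.1 + -q.2.2.1 / q.2.2.2 := by
        funext q; ring
      rw [he]
      exact hm0.add_atBot hm1
    have hw : Tendsto (fun q : ℝ × ℝ × ℝ × ℝ => logisticW (-q.1 / q.2.1 - q.2.2.1 / q.2.2.2))
        (𝓝[{q : ℝ × ℝ × ℝ × ℝ | q.2.2.2 < 0}] (a0, b0, a1, 0)) (𝓝 0) :=
      logisticW_atBot.comp hΔ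
    have hmax : Tendsto (fun q : ℝ × ℝ × ℝ × ℝ => max (phiS q.1 q.2.1) (-q.2.2.1 / q.2.2.2))
        (𝓝[{q : ℝ × ℝ × ℝ × ℝ | q.2.2.2 < 0}] (a0, b0, a1, 0)) (𝓝 (phiS a0 b0)) :=
      tendsto_max_atBot (hΦ0 _) hm1
    have hmin : Tendsto (fun q : ℝ × ℝ × ℝ × ℝ => min (phiS q.2.2.1 q.2.2.2) (-q.1 / q.2.1))
        (𝓝[{q : ℝ × ℝ × ℝ × ℝ | q.2.2.2 < 0}] (a0, b0, a1, 0)) (𝓝 (min 0 (-a0 / b0))) :=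
      (hΦ1 _).min hm0
    have h1w : Tendsto
        (fun q : ℝ × ℝ × ℝ × ℝ => 1 - logisticW (-q.1 / q.2.1 - q.2.2.1 / q.2.2.2))
        (𝓝[{q : ℝ × ℝ × ℝ × ℝ | q.2.2.2 < 0}] (a0, b0, a1, 0)) (𝓝 (1 - 0)) :=
      tendsto_const_nhds.sub hw
    have htot := (h1w.mul hmax).add (hw.mul hmin)
    rw [show (1 - (0:ℝ)) * phiS a0 b0 + 0 * min 0 (-a0 / b0) = phiS a0 b0 by ring] at htot
    refine Tendsto.congr' ?_ htot
    filter_upwards [hev0.filter_mono nhdsWithin_le_nhds, self_mem_nhdsWithin] with q h1 h2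
    exact (Kl_eq_blend0 h1 h2).symm


lemma caseE {a0 b0 a1 : ℝ} (hb0 : b0 < 0) (ha1 : a1 < 0) :
    ContinuousAt K4 (a0, b0, a1, 0) := by
  have hKp : K4 (a0, b0, a1, 0) = phiS a0 b0 := by
    show Kl a0 b0 a1 0 = phiS a0 b0
    rw [Kl_eq_max hb0.le le_rfl, phiS_zero, max_eq_left (phiS_nonneg hb0)]
  unfold ContinuousAt
  rw [hKp, ← nhdsWithin_univ,
    show (univ : Set (ℝ × ℝ × ℝ × ℝ)) = {q | q.2.2.2 ≤ 0} ∪ {q | 0 < q.2.2.2} by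
      ext q; simp [lt_or_ge, le_or_gt],
    nhdsWithin_union, tendsto_sup]
  have hev0 : ∀ᶠ q : ℝ × ℝ × ℝ × ℝ in 𝓝 ((a0, b0, a1, (0:ℝ)) : ℝ × ℝ × ℝ × ℝ), q.2.1 < 0 :=
    isOpen_b0_neg.mem_nhds hb0
  have hΦ0 : ∀ (T : Set (ℝ × ℝ × ℝ × ℝ)), Tendsto (fun q : ℝ × ℝ × ℝ × ℝ => phiS q.1 q.2.1)
      (𝓝[T] (a0, b0, a1, 0)) (𝓝 (phiS a0 b0)) := fun T =>
    ((contAt_phi0 (p := (a0, b0, a1, 0)) (Or.inl hb0.ne)).tendsto).mono_left nhdsWithin_le_nhds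
  have hΦ1 : ∀ (T : Set (ℝ × ℝ × ℝ × ℝ)),
      Tendsto (fun q : ℝ × ℝ × ℝ × ℝ => phiS q.2.2.1 q.2.2.2)
      (𝓝[T] (a0, b0, a1, 0)) (𝓝 0) := by
    intro T
    have h := (contAt_phi1 (p := (a0, b0, a1, 0)) (Or.inr ha1)).tendsto
    rw [show phiS ((a0, b0, a1, (0:ℝ)) : ℝ × ℝ × ℝ × ℝ).2.2.1
        ((a0, b0, a1, (0:ℝ)) : ℝ × ℝ × ℝ × ℝ).2.2.2 = 0 from phiS_zero a1] at h
    exact h.mono_left nhdsWithin_le_nhds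
  constructor
  · -- b1 ≤ 0 : max branch
    have hmax : Tendsto (fun q : ℝ × ℝ × ℝ × ℝ => max (phiS q.1 q.2.1) (phiS q.2.2.1 q.2.2.2))
        (𝓝[{q : ℝ × ℝ × ℝ × ℝ | q.2.2.2 ≤ 0}] (a0, b0, a1, 0)) (𝓝 (max (phiS a0 b0) 0)) :=
      (hΦ0 _).max (hΦ1 _)
    rw [max_eq_left (phiS_nonneg hb0)] at hmax
    refine Tendsto.congr' ?_ hmax
    filter_upwards [hev0.filter_mono nhdsWithin_le_nhds, self_mem_nhdsWithin] with q h1 h2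
    exact (Kl_eq_max h1.le h2).symm
  · -- b1 > 0 : blend branch (i = 1, j = 0)
    have hb1T := tendsto_b1_pos (a0 := a0) (b0 := b0) (a1 := a1)
      (T := {q : ℝ × ℝ × ℝ × ℝ | 0 < q.2.2.2}) (fun q hq => hq)
    have ha1T : Tendsto (fun q : ℝ × ℝ × ℝ × ℝ => q.2.2.1)
        (𝓝[{q : ℝ × ℝ × ℝ × ℝ | 0 < q.2.2.2}] (a0, b0, a1, 0)) (𝓝 a1) := by
      have h : Tendsto (fun q : ℝ × ℝ × ℝ × ℝ => q.2.2.1)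
          (𝓝 ((a0, b0, a1, (0:ℝ)) : ℝ × ℝ × ℝ × ℝ)) (𝓝 a1) := by
        simpa using ((by fun_prop : Continuous fun q : ℝ × ℝ × ℝ × ℝ => q.2.2.1).tendsto
          ((a0, b0, a1, (0:ℝ)) : ℝ × ℝ × ℝ × ℝ))
      exact h.mono_left nhdsWithin_le_nhds
    have hm1 : Tendsto (fun q : ℝ × ℝ × ℝ × ℝ => -q.2.2.1 / q.2.2.2)
        (𝓝[{q : ℝ × ℝ × ℝ × ℝ | 0 < q.2.2.2}] (a0, b0, a1, 0)) atTop :=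
      tendsto_neg_div_atTop ha1 ha1T hb1T
    have hm0 : Tendsto (fun q : ℝ × ℝ × ℝ × ℝ => -q.1 / q.2.1)
        (𝓝[{q : ℝ × ℝ × ℝ × ℝ | 0 < q.2.2.2}] (a0, b0, a1, 0)) (𝓝 (-a0 / b0)) := by
      have h : ContinuousAt (fun q : ℝ × ℝ × ℝ × ℝ => -q.1 / q.2.1) (a0, b0, a1, 0) :=
        ContinuousAt.div (by fun_prop) (by fun_prop) hb0.ne
      exact h.tendsto.mono_left nhdsWithin_le_nhds
    have hΔ : Tendsto (fun q : ℝ × ℝ × ℝ × ℝ => -q.1 / q.2.1 - q.2.2.1 / q.2.2.2)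
        (𝓝[{q : ℝ × ℝ × ℝ × ℝ | 0 < q.2.2.2}] (a0, b0, a1, 0)) atTop := by
      have he : (fun q : ℝ × ℝ × ℝ × ℝ => -q.1 / q.2.1 - q.2.2.1 / q.2.2.2)
          = fun q : ℝ × ℝ × ℝ × ℝ => -q.1 / q.2.1 + -q.2.2.1 / q.2.2.2 := by
        funext q; ring
      rw [he]
      exact hm0.add_atTop hm1
    have hw : Tendsto (fun q : ℝ × ℝ × ℝ × ℝ => logisticW (-q.1 / q.2.1 - q.2.2.1 / q.2.2.2))
        (𝓝[{q : ℝ × ℝ × ℝ × ℝ | 0 < q.2.2.2}] (a0, b0, a1, 0)) (𝓝 1) :=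
      logisticW_atTop.comp hΔ
    have hmax : Tendsto (fun q : ℝ × ℝ × ℝ × ℝ => max (phiS q.2.2.1 q.2.2.2) (-q.1 / q.2.1))
        (𝓝[{q : ℝ × ℝ × ℝ × ℝ | 0 < q.2.2.2}] (a0, b0, a1, 0)) (𝓝 (max 0 (-a0 / b0))) :=
      (hΦ1 _).max hm0
    have hmin : Tendsto (fun q : ℝ × ℝ × ℝ × ℝ => min (phiS q.1 q.2.1) (-q.2.2.1 / q.2.2.2))
        (𝓝[{q : ℝ × ℝ × ℝ × ℝ | 0 < q.2.2.2}] (a0, b0, a1, 0)) (𝓝 (phiS a0 b0)) :=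
      tendsto_min_atTop (hΦ0 _) hm1
    have h1w : Tendsto
        (fun q : ℝ × ℝ × ℝ × ℝ => 1 - logisticW (-q.1 / q.2.1 - q.2.2.1 / q.2.2.2))
        (𝓝[{q : ℝ × ℝ × ℝ × ℝ | 0 < q.2.2.2}] (a0, b0, a1, 0)) (𝓝 (1 - 1)) :=
      tendsto_const_nhds.sub hw
    have htot := (h1w.mul hmax).add (hw.mul hmin)
    rw [show (1 - (1:ℝ)) * max 0 (-a0 / b0) + 1 * phiS a0 b0 = phiS a0 b0 by ring] at htot
    refine Tendsto.congr' ?_ htot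
    filter_upwards [hev0.filter_mono nhdsWithin_le_nhds, self_mem_nhdsWithin] with q h1 h2
    exact (Kl_eq_blend1 h1 h2).symm

lemma caseF {a0 a1 : ℝ} (ha0 : a0 < 0) (ha1 : a1 < 0) :
    ContinuousAt K4 (a0, 0, a1, 0) := by
  have hKp : K4 (a0, 0, a1, 0) = 0 := by
    show Kl a0 0 a1 0 = 0
    rw [Kl_eq_min le_rfl le_rfl, phiS_zero, phiS_zero, min_self]
  unfold ContinuousAt
  rw [hKp, ← nhdsWithin_univ,
    show (univ : Set (ℝ × ℝ × ℝ × ℝ)) =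
      ({q | 0 ≤ q.2.1 ∧ 0 ≤ q.2.2.2} ∪ {q | q.2.1 ≤ 0 ∧ q.2.2.2 ≤ 0}) ∪
      ({q | 0 < q.2.1 ∧ q.2.2.2 < 0} ∪ {q | q.2.1 < 0 ∧ 0 < q.2.2.2}) by
      apply Eq.symm
      apply Set.eq_univ_of_forall
      intro q
      rcases le_or_gt 0 q.2.1 with h | h <;> rcases le_or_gt 0 q.2.2.2 with h' | h'
      · exact Or.inl (Or.inl ⟨h, h'⟩)
      · rcases eq_or_lt_of_le h with he | hlt
        · exact Or.inl (Or.inr ⟨he.ge, h'.le⟩)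
        · exact Or.inr (Or.inl ⟨hlt, h'⟩)
      · rcases eq_or_lt_of_le h' with he | hlt
        · exact Or.inl (Or.inr ⟨h.le, he.ge⟩)
        · exact Or.inr (Or.inr ⟨h, hlt⟩)
      · exact Or.inl (Or.inr ⟨h.le, h'.le⟩),
    nhdsWithin_union, nhdsWithin_union, nhdsWithin_union, tendsto_sup, tendsto_sup, tendsto_sup]
  have hΦ0 : ∀ (T : Set (ℝ × ℝ × ℝ × ℝ)), Tendsto (fun q : ℝ × ℝ × ℝ × ℝ => phiS q.1 q.2.1)
      (𝓝[T] (a0, 0, a1, 0)) (𝓝 0) := by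
    intro T
    have h := (contAt_phi0 (p := (a0, 0, a1, 0)) (Or.inr ha0)).tendsto
    rw [show phiS ((a0, (0:ℝ), a1, (0:ℝ)) : ℝ × ℝ × ℝ × ℝ).1
        ((a0, (0:ℝ), a1, (0:ℝ)) : ℝ × ℝ × ℝ × ℝ).2.1 = 0 from phiS_zero a0] at h
    exact h.mono_left nhdsWithin_le_nhds
  have hΦ1 : ∀ (T : Set (ℝ × ℝ × ℝ × ℝ)),
      Tendsto (fun q : ℝ × ℝ × ℝ × ℝ => phiS q.2.2.1 q.2.2.2)
      (𝓝[T] (a0, 0, a1, 0)) (𝓝 0) := by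
    intro T
    have h := (contAt_phi1 (p := (a0, 0, a1, 0)) (Or.inr ha1)).tendsto
    rw [show phiS ((a0, (0:ℝ), a1, (0:ℝ)) : ℝ × ℝ × ℝ × ℝ).2.2.1
        ((a0, (0:ℝ), a1, (0:ℝ)) : ℝ × ℝ × ℝ × ℝ).2.2.2 = 0 from phiS_zero a1] at h
    exact h.mono_left nhdsWithin_le_nhds
  have ha0T : ∀ (T : Set (ℝ × ℝ × ℝ × ℝ)), Tendsto (fun q : ℝ × ℝ × ℝ × ℝ => q.1)
      (𝓝[T] (a0, 0, a1, 0)) (𝓝 a0) := fun T => by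
    have h : Tendsto (fun q : ℝ × ℝ × ℝ × ℝ => q.1)
        (𝓝 ((a0, (0:ℝ), a1, (0:ℝ)) : ℝ × ℝ × ℝ × ℝ)) (𝓝 a0) := by
      simpa using ((by fun_prop : Continuous fun q : ℝ × ℝ × ℝ × ℝ => q.1).tendsto
        ((a0, (0:ℝ), a1, (0:ℝ)) : ℝ × ℝ × ℝ × ℝ))
    exact h.mono_left nhdsWithin_le_nhds
  have ha1T : ∀ (T : Set (ℝ × ℝ × ℝ × ℝ)), Tendsto (fun q : ℝ × ℝ × ℝ × ℝ => q.2.2.1)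
      (𝓝[T] (a0, 0, a1, 0)) (𝓝 a1) := fun T => by
    have h : Tendsto (fun q : ℝ × ℝ × ℝ × ℝ => q.2.2.1)
        (𝓝 ((a0, (0:ℝ), a1, (0:ℝ)) : ℝ × ℝ × ℝ × ℝ)) (𝓝 a1) := by
      simpa using ((by fun_prop : Continuous fun q : ℝ × ℝ × ℝ × ℝ => q.2.2.1).tendsto
        ((a0, (0:ℝ), a1, (0:ℝ)) : ℝ × ℝ × ℝ × ℝ))
    exact h.mono_left nhdsWithin_le_nhds
  refine ⟨⟨?_, ?_⟩, ?_, ?_⟩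
  · -- min branch
    have hmin : Tendsto (fun q : ℝ × ℝ × ℝ × ℝ => min (phiS q.1 q.2.1) (phiS q.2.2.1 q.2.2.2))
        (𝓝[{q : ℝ × ℝ × ℝ × ℝ | 0 ≤ q.2.1 ∧ 0 ≤ q.2.2.2}] (a0, 0, a1, 0))
        (𝓝 (min 0 0)) := (hΦ0 _).min (hΦ1 _)
    rw [min_self] at hmin
    refine Tendsto.congr' ?_ hmin
    filter_upwards [self_mem_nhdsWithin] with q hq
    exact (Kl_eq_min hq.1 hq.2).symm
  · -- max branch
    have hmax : Tendsto (fun q : ℝ × ℝ × ℝ × ℝ => max (phiS q.1 q.2.1) (phiS q.2.2.1 q.2.2.2))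
        (𝓝[{q : ℝ × ℝ × ℝ × ℝ | q.2.1 ≤ 0 ∧ q.2.2.2 ≤ 0}] (a0, 0, a1, 0))
        (𝓝 (max 0 0)) := (hΦ0 _).max (hΦ1 _)
    rw [max_self] at hmax
    refine Tendsto.congr' ?_ hmax
    filter_upwards [self_mem_nhdsWithin] with q hq
    exact (Kl_eq_max hq.1 hq.2).symm
  · -- blend, b0 > 0, b1 < 0
    have hb0T := tendsto_b0_pos (a0 := a0) (a1 := a1) (b1 := (0:ℝ))
      (T := {q : ℝ × ℝ × ℝ × ℝ | 0 < q.2.1 ∧ q.2.2.2 < 0}) (fun q hq => hq.1)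
    have hb1T := tendsto_b1_neg (a0 := a0) (b0 := (0:ℝ)) (a1 := a1)
      (T := {q : ℝ × ℝ × ℝ × ℝ | 0 < q.2.1 ∧ q.2.2.2 < 0}) (fun q hq => hq.2)
    have hm0 : Tendsto (fun q : ℝ × ℝ × ℝ × ℝ => -q.1 / q.2.1)
        (𝓝[{q : ℝ × ℝ × ℝ × ℝ | 0 < q.2.1 ∧ q.2.2.2 < 0}] (a0, 0, a1, 0)) atTop :=
      tendsto_neg_div_atTop ha0 (ha0T _) hb0T
    have hm1 : Tendsto (fun q : ℝ × ℝ × ℝ × ℝ => -q.2.2.1 / q.2.2.2)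
        (𝓝[{q : ℝ × ℝ × ℝ × ℝ | 0 < q.2.1 ∧ q.2.2.2 < 0}] (a0, 0, a1, 0)) atBot :=
      tendsto_neg_div_atBot ha1 (ha1T _) hb1T
    have hX : Tendsto (fun q : ℝ × ℝ × ℝ × ℝ => max (phiS q.1 q.2.1) (-q.2.2.1 / q.2.2.2))
        (𝓝[{q : ℝ × ℝ × ℝ × ℝ | 0 < q.2.1 ∧ q.2.2.2 < 0}] (a0, 0, a1, 0)) (𝓝 0) :=
      tendsto_max_atBot (hΦ0 _) hm1
    have hY : Tendsto (fun q : ℝ × ℝ × ℝ × ℝ => min (phiS q.2.2.1 q.2.2.2) (-q.1 / q.2.1))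
        (𝓝[{q : ℝ × ℝ × ℝ × ℝ | 0 < q.2.1 ∧ q.2.2.2 < 0}] (a0, 0, a1, 0)) (𝓝 0) :=
      tendsto_min_atTop (hΦ1 _) hm0
    refine tendsto_of_tendsto_of_tendsto_of_le_of_le'
      (g := fun q : ℝ × ℝ × ℝ × ℝ => min
        (max (phiS q.1 q.2.1) (-q.2.2.1 / q.2.2.2)) (min (phiS q.2.2.1 q.2.2.2) (-q.1 / q.2.1)))
      (h := fun q : ℝ × ℝ × ℝ × ℝ => max
        (max (phiS q.1 q.2.1) (-q.2.2.1 / q.2.2.2)) (min (phiS q.2.2.1 q.2.2.2) (-q.1 / q.2.1)))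
      (by simpa using hX.min hY) (by simpa using hX.max hY) ?_ ?_
    · filter_upwards [self_mem_nhdsWithin] with q hq
      rw [show K4 q = Kl q.1 q.2.1 q.2.2.1 q.2.2.2 from rfl, Kl_eq_blend0 hq.1 hq.2]
      have h1 := logisticW_nonneg (-q.1 / q.2.1 - q.2.2.1 / q.2.2.2)
      have h2 := logisticW_le_one (-q.1 / q.2.1 - q.2.2.1 / q.2.2.2)
      have h3 := min_le_left (max (phiS q.1 q.2.1) (-q.2.2.1 / q.2.2.2))
        (min (phiS q.2.2.1 q.2.2.2) (-q.1 / q.2.1))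
      have h4 := min_le_right (max (phiS q.1 q.2.1) (-q.2.2.1 / q.2.2.2))
        (min (phiS q.2.2.1 q.2.2.2) (-q.1 / q.2.1))
      nlinarith [h3, h4, h1, h2]
    · filter_upwards [self_mem_nhdsWithin] with q hq
      rw [show K4 q = Kl q.1 q.2.1 q.2.2.1 q.2.2.2 from rfl, Kl_eq_blend0 hq.1 hq.2]
      have h1 := logisticW_nonneg (-q.1 / q.2.1 - q.2.2.1 / q.2.2.2)
      have h2 := logisticW_le_one (-q.1 / q.2.1 - q.2.2.1 / q.2.2.2)
      have h3 := le_max_left (max (phiS q.1 q.2.1) (-q.2.2.1 / q.2.2.2))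
        (min (phiS q.2.2.1 q.2.2.2) (-q.1 / q.2.1))
      have h4 := le_max_right (max (phiS q.1 q.2.1) (-q.2.2.1 / q.2.2.2))
        (min (phiS q.2.2.1 q.2.2.2) (-q.1 / q.2.1))
      nlinarith [h3, h4, h1, h2]
  · -- blend, b0 < 0, b1 > 0
    have hb0T := tendsto_b0_neg (a0 := a0) (a1 := a1) (b1 := (0:ℝ))
      (T := {q : ℝ × ℝ × ℝ × ℝ | q.2.1 < 0 ∧ 0 < q.2.2.2}) (fun q hq => hq.1)
    have hb1T := tendsto_b1_pos (a0 := a0) (b0 := (0:ℝ)) (a1 := a1)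
      (T := {q : ℝ × ℝ × ℝ × ℝ | q.2.1 < 0 ∧ 0 < q.2.2.2}) (fun q hq => hq.2)
    have hm0 : Tendsto (fun q : ℝ × ℝ × ℝ × ℝ => -q.1 / q.2.1)
        (𝓝[{q : ℝ × ℝ × ℝ × ℝ | q.2.1 < 0 ∧ 0 < q.2.2.2}] (a0, 0, a1, 0)) atBot :=
      tendsto_neg_div_atBot ha0 (ha0T _) hb0T
    have hm1 : Tendsto (fun q : ℝ × ℝ × ℝ × ℝ => -q.2.2.1 / q.2.2.2)
        (𝓝[{q : ℝ × ℝ × ℝ × ℝ | q.2.1 < 0 ∧ 0 < q.2.2.2}] (a0, 0, a1, 0)) atTop :=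
      tendsto_neg_div_atTop ha1 (ha1T _) hb1T
    have hX : Tendsto (fun q : ℝ × ℝ × ℝ × ℝ => max (phiS q.2.2.1 q.2.2.2) (-q.1 / q.2.1))
        (𝓝[{q : ℝ × ℝ × ℝ × ℝ | q.2.1 < 0 ∧ 0 < q.2.2.2}] (a0, 0, a1, 0)) (𝓝 0) :=
      tendsto_max_atBot (hΦ1 _) hm0
    have hY : Tendsto (fun q : ℝ × ℝ × ℝ × ℝ => min (phiS q.1 q.2.1) (-q.2.2.1 / q.2.2.2))
        (𝓝[{q : ℝ × ℝ × ℝ × ℝ | q.2.1 < 0 ∧ 0 < q.2.2.2}] (a0, 0, a1, 0)) (𝓝 0) :=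
      tendsto_min_atTop (hΦ0 _) hm1
    refine tendsto_of_tendsto_of_tendsto_of_le_of_le'
      (g := fun q : ℝ × ℝ × ℝ × ℝ => min
        (max (phiS q.2.2.1 q.2.2.2) (-q.1 / q.2.1)) (min (phiS q.1 q.2.1) (-q.2.2.1 / q.2.2.2)))
      (h := fun q : ℝ × ℝ × ℝ × ℝ => max
        (max (phiS q.2.2.1 q.2.2.2) (-q.1 / q.2.1)) (min (phiS q.1 q.2.1) (-q.2.2.1 / q.2.2.2)))
      (by simpa using hX.min hY) (by simpa using hX.max hY) ?_ ?_
    · filter_upwards [self_mem_nhdsWithin] with q hq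
      rw [show K4 q = Kl q.1 q.2.1 q.2.2.1 q.2.2.2 from rfl, Kl_eq_blend1 hq.1 hq.2]
      have h1 := logisticW_nonneg (-q.1 / q.2.1 - q.2.2.1 / q.2.2.2)
      have h2 := logisticW_le_one (-q.1 / q.2.1 - q.2.2.1 / q.2.2.2)
      have h3 := min_le_left (max (phiS q.2.2.1 q.2.2.2) (-q.1 / q.2.1))
        (min (phiS q.1 q.2.1) (-q.2.2.1 / q.2.2.2))
      have h4 := min_le_right (max (phiS q.2.2.1 q.2.2.2) (-q.1 / q.2.1))
        (min (phiS q.1 q.2.1) (-q.2.2.1 / q.2.2.2))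
      nlinarith [h3, h4, h1, h2]
    · filter_upwards [self_mem_nhdsWithin] with q hq
      rw [show K4 q = Kl q.1 q.2.1 q.2.2.1 q.2.2.2 from rfl, Kl_eq_blend1 hq.1 hq.2]
      have h1 := logisticW_nonneg (-q.1 / q.2.1 - q.2.2.1 / q.2.2.2)
      have h2 := logisticW_le_one (-q.1 / q.2.1 - q.2.2.1 / q.2.2.2)
      have h3 := le_max_left (max (phiS q.2.2.1 q.2.2.2) (-q.1 / q.2.1))
        (min (phiS q.1 q.2.1) (-q.2.2.1 / q.2.2.2))
      have h4 := le_max_right (max (phiS q.2.2.1 q.2.2.2) (-q.1 / q.2.1))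
        (min (phiS q.1 q.2.1) (-q.2.2.1 / q.2.2.2))
      nlinarith [h3, h4, h1, h2]

lemma Kl_contAt {a0 b0 a1 b1 : ℝ} (h0 : b0 = 0 → a0 < 0) (h1 : b1 = 0 → a1 < 0) :
    ContinuousAt K4 (a0, b0, a1, b1) := by
  have symm_trans : ∀ x0 y0 x1 y1 : ℝ,
      ContinuousAt K4 (x1, y1, x0, y0) → ContinuousAt K4 (x0, y0, x1, y1) := by
    intro x0 y0 x1 y1 h
    have hσ : Continuous (fun q : ℝ × ℝ × ℝ × ℝ => (q.2.2.1, q.2.2.2, q.1, q.2.1)) := by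
      fun_prop
    have hKs : K4 = fun q : ℝ × ℝ × ℝ × ℝ => K4 (q.2.2.1, q.2.2.2, q.1, q.2.1) := by
      funext q
      show Kl q.1 q.2.1 q.2.2.1 q.2.2.2 = Kl q.2.2.1 q.2.2.2 q.1 q.2.1
      exact Kl_symm _ _ _ _
    rw [hKs]
    exact ContinuousAt.comp (x := ((x0, y0, x1, y1) : ℝ × ℝ × ℝ × ℝ)) h hσ.continuousAt
  rcases lt_trichotomy b0 0 with hb0 | hb0 | hb0 <;>
    rcases lt_trichotomy b1 0 with hb1 | hb1 | hb1
  · exact caseB hb0 hb1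
  · subst hb1; exact caseE hb0 (h1 rfl)
  · exact symm_trans _ _ _ _ (caseC hb1 hb0)
  · subst hb0; exact symm_trans _ _ _ _ (caseE hb1 (h0 rfl))
  · subst hb0; subst hb1; exact caseF (h0 rfl) (h1 rfl)
  · subst hb0; exact symm_trans _ _ _ _ (caseD hb1 (h0 rfl))
  · exact caseC hb0 hb1
  · subst hb1; exact caseD hb0 (h1 rfl)
  · exact caseA hb0 hb1

/-- `K_l` is continuous on `D_c`. -/
theorem stmt_15 :
    ContinuousOn (fun p : ℝ × ℝ × ℝ × ℝ => Kl p.1 p.2.1 p.2.2.1 p.2.2.2) Dc := by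
  intro p hp
  have h := Kl_contAt (a0 := p.1) (b0 := p.2.1) (a1 := p.2.2.1) (b1 := p.2.2.2)
    hp.1 hp.2.1
  exact h.continuousWithinAt
end

section
/- For every p = (a₀,b₀,a₁,b₁) in D* = {(a₀,b₀,a₁,b₁) ∈ ℝ⁴ : (b₀ = 0 implies a₀ < 0) and (b₁ = 0 implies a₁ < 0)}, the input u = K_l^*(p) satisfies a₁ + b₁·u ≤ 0. Moreover, if in addition (b₀b₁ < 0 implies -a_j/b_j < -a_i/b_i, with i the index such that b_i > 0 and j the index such that b_j < 0), then a₀ + b₀·u < 0 and a₁ + b₁·u < 0, while if b₀b₁ < 0 and -a_j/b_j ≥ -a_i/b_i then a₁ + b₁·u = 0. -/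
/-- The safety-prioritizing modification `K_l^*`: in the incompatible region
(`b₀·b₁ < 0` and `-a_j/b_j ≥ -a_i/b_i`, with `i` the index with `b_i > 0` and `j`
the index with `b_j < 0`), the feedback is `-a₁/b₁`; otherwise it is `K_l`. -/
noncomputable def KlStar (a0 b0 a1 b1 : ℝ) : ℝ :=
  if b0 * b1 < 0 ∧
      ((0 < b0 ∧ -a0 / b0 ≤ -a1 / b1) ∨ (0 < b1 ∧ -a1 / b1 ≤ -a0 / b0)) then
    -a1 / b1
  else Kl a0 b0 a1 b1


lemma logisticW_pos (z : ℝ) : 0 < logisticW z := by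
  unfold logisticW; positivity

lemma logisticW_lt_one (z : ℝ) : logisticW z < 1 := by
  unfold logisticW
  have h := Real.exp_pos (-z)
  rw [div_lt_one (by linarith)]; linarith

lemma aux_pos {a b u : ℝ} (hb : 0 < b) (hu : u ≤ phiS a b) : a + b * u < 0 := by
  have h := phiS_key a b hb.ne'
  nlinarith

lemma aux_neg {a b u : ℝ} (hb : b < 0) (hu : phiS a b ≤ u) : a + b * u < 0 := by
  have h := phiS_key a b hb.ne
  nlinarith

lemma phiS_lt_div {a b : ℝ} (hb : 0 < b) : phiS a b < -a / b := by
  have h := phiS_key a b hb.ne'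
  rw [lt_div_iff₀ hb]
  nlinarith

lemma phiS_gt_div {a b : ℝ} (hb : b < 0) : -a / b < phiS a b := by
  have h := phiS_key a b hb.ne
  rw [div_lt_iff_of_neg hb]
  nlinarith

lemma lt_of_pos_mul {a b u : ℝ} (hb : 0 < b) (hu : u < -a / b) : a + b * u < 0 := by
  rw [lt_div_iff₀ hb] at hu; nlinarith

lemma lt_of_neg_mul {a b u : ℝ} (hb : b < 0) (hu : -a / b < u) : a + b * u < 0 := by
  rw [div_lt_iff_of_neg hb] at hu; nlinarith

lemma Kl_strict (a0 b0 a1 b1 : ℝ)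
    (h0 : b0 = 0 → a0 < 0) (h1 : b1 = 0 → a1 < 0)
    (hinc : ¬(b0 * b1 < 0 ∧
      ((0 < b0 ∧ -a0 / b0 ≤ -a1 / b1) ∨ (0 < b1 ∧ -a1 / b1 ≤ -a0 / b0)))) :
    a0 + b0 * Kl a0 b0 a1 b1 < 0 ∧ a1 + b1 * Kl a0 b0 a1 b1 < 0 := by
  unfold Kl
  by_cases hm : b0 * b1 < 0
  · rw [if_pos hm]
    have hboth := (not_and.mp hinc) hm
    push_neg at hboth
    obtain ⟨hc0, hc1⟩ := hboth
    set L := logisticW (-a0 / b0 - a1 / b1) with hL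
    have hLpos := logisticW_pos (-a0 / b0 - a1 / b1)
    have hLlt := logisticW_lt_one (-a0 / b0 - a1 / b1)
    by_cases hb0 : 0 < b0
    · rw [if_pos hb0]
      have hb1 : b1 < 0 := by nlinarith
      have hcmp : -a1 / b1 < -a0 / b0 := hc0 hb0
      have hX1 : max (phiS a0 b0) (-a1 / b1) < -a0 / b0 :=
        max_lt (phiS_lt_div hb0) hcmp
      have hX2 : -a1 / b1 ≤ max (phiS a0 b0) (-a1 / b1) := le_max_right _ _
      have hY1 : -a1 / b1 < min (phiS a1 b1) (-a0 / b0) :=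
        lt_min (phiS_gt_div hb1) hcmp
      have hY2 : min (phiS a1 b1) (-a0 / b0) ≤ -a0 / b0 := min_le_right _ _
      set X := max (phiS a0 b0) (-a1 / b1)
      set Y := min (phiS a1 b1) (-a0 / b0)
      have hu1 : (1 - L) * X + L * Y < -a0 / b0 := by nlinarith
      have hu2 : -a1 / b1 < (1 - L) * X + L * Y := by nlinarith
      exact ⟨lt_of_pos_mul hb0 hu1, lt_of_neg_mul hb1 hu2⟩
    · rw [if_neg hb0]
      push_neg at hb0
      have hb0' : b0 < 0 := by
        rcases lt_or_eq_of_le hb0 with h | h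
        · exact h
        · exfalso; rw [h] at hm; simp at hm
      have hb1 : 0 < b1 := by nlinarith
      have hcmp : -a0 / b0 < -a1 / b1 := hc1 hb1
      have hX1 : max (phiS a1 b1) (-a0 / b0) < -a1 / b1 :=
        max_lt (phiS_lt_div hb1) hcmp
      have hX2 : -a0 / b0 ≤ max (phiS a1 b1) (-a0 / b0) := le_max_right _ _
      have hY1 : -a0 / b0 < min (phiS a0 b0) (-a1 / b1) :=
        lt_min (phiS_gt_div hb0') hcmp
      have hY2 : min (phiS a0 b0) (-a1 / b1) ≤ -a1 / b1 := min_le_right _ _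
      set X := max (phiS a1 b1) (-a0 / b0)
      set Y := min (phiS a0 b0) (-a1 / b1)
      have hu1 : (1 - L) * X + L * Y < -a1 / b1 := by nlinarith
      have hu2 : -a0 / b0 < (1 - L) * X + L * Y := by nlinarith
      exact ⟨lt_of_neg_mul hb0' hu2, lt_of_pos_mul hb1 hu1⟩
  · rw [if_neg hm]
    push_neg at hm
    by_cases hnn : 0 ≤ b0 ∧ 0 ≤ b1
    · rw [if_pos hnn]
      constructor
      · rcases lt_or_eq_of_le hnn.1 with h | h
        · exact aux_pos h (min_le_left _ _)
        · simpa [← h] using h0 h.symm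
      · rcases lt_or_eq_of_le hnn.2 with h | h
        · exact aux_pos h (min_le_right _ _)
        · simpa [← h] using h1 h.symm
    · rw [if_neg hnn]
      have hnp : b0 ≤ 0 ∧ b1 ≤ 0 := by
        rcases not_and_or.mp hnn with h | h <;> push_neg at h <;>
          constructor <;> nlinarith
      constructor
      · rcases lt_or_eq_of_le hnp.1 with h | h
        · exact aux_neg h (le_max_left _ _)
        · simpa [h] using h0 h
      · rcases lt_or_eq_of_le hnp.2 with h | h
        · exact aux_neg h (le_max_right _ _)
        · simpa [h] using h1 h

/-- for data satisfying the pointwise CLF and CBF conditions, the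
input `u = K_l^*(a₀,b₀,a₁,b₁)` always satisfies the non-strict barrier inequality
`a₁ + b₁·u ≤ 0`; under the compatibility condition it satisfies both strict
inequalities; and in the incompatible region it satisfies `a₁ + b₁·u = 0`. -/
theorem stmt_18 (a0 b0 a1 b1 : ℝ)
    (h0 : b0 = 0 → a0 < 0) (h1 : b1 = 0 → a1 < 0) :
    a1 + b1 * KlStar a0 b0 a1 b1 ≤ 0 ∧
    ((b0 * b1 < 0 →
        (0 < b0 → -a1 / b1 < -a0 / b0) ∧ (0 < b1 → -a0 / b0 < -a1 / b1)) →
      a0 + b0 * KlStar a0 b0 a1 b1 < 0 ∧ a1 + b1 * KlStar a0 b0 a1 b1 < 0) ∧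
    (b0 * b1 < 0 →
      ((0 < b0 ∧ -a0 / b0 ≤ -a1 / b1) ∨ (0 < b1 ∧ -a1 / b1 ≤ -a0 / b0)) →
      a1 + b1 * KlStar a0 b0 a1 b1 = 0) := by
  by_cases hinc : b0 * b1 < 0 ∧
      ((0 < b0 ∧ -a0 / b0 ≤ -a1 / b1) ∨ (0 < b1 ∧ -a1 / b1 ≤ -a0 / b0))
  · have hu : KlStar a0 b0 a1 b1 = -a1 / b1 := by
      unfold KlStar; rw [if_pos hinc]
    have hb1 : b1 ≠ 0 := by
      intro h; rw [h] at hinc; simp at hinc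
    have he : a1 + b1 * KlStar a0 b0 a1 b1 = 0 := by
      rw [hu]; field_simp; ring
    refine ⟨le_of_eq he, ?_, fun _ _ => he⟩
    intro hcomp
    exfalso
    obtain ⟨hm, hor⟩ := hinc
    rcases hor with ⟨hb0, hle⟩ | ⟨hb1', hle⟩
    · exact absurd hle (not_le.mpr ((hcomp hm).1 hb0))
    · exact absurd hle (not_le.mpr ((hcomp hm).2 hb1'))
  · have hu : KlStar a0 b0 a1 b1 = Kl a0 b0 a1 b1 := by
      unfold KlStar; rw [if_neg hinc]
    have hs := Kl_strict a0 b0 a1 b1 h0 h1 hinc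
    rw [hu]
    exact ⟨le_of_lt hs.2, fun _ => hs, fun hm hc => absurd ⟨hm, hc⟩ hinc⟩
end
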